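/- Let R_1(z) and S_1(w) be nonconstant rational functions over ℂ and let d ≥ 2. Then the polynomial obtained by clearing denominators in (R_1(z) − S_1(w))^d cannot be written (up to a nonzero scalar) as the polynomial obtained by clearing denominators in R(z) − S(w) for any rational functions R in z and S in w; equivalently, if Q(z,w) is a bivariate polynomial whose coefficient matrix has rank 2 and Q is not a product of a polynomial in z alone times a polynomial in w alone, then for d ≥ 2 the coefficient matrix of Q^d has rank greater than 2. -/

import Mathlib

open Polynomial

/-- Coefficient matrix of a bivariate polynomial `P ∈ (ℂ[w])[z]`:
entry `(j, k)` is the coefficient of `z^j w^k`. -/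
noncomputable def coeffMatrix (m n : ℕ) (P : Polynomial (Polynomial ℂ)) :
    Matrix (Fin (m + 1)) (Fin (n + 1)) ℂ :=
  Matrix.of fun j k => (P.coeff (j : ℕ)).coeff (k : ℕ)

/-!
Write `Q = Σ_j Q_j(w) z^j`. The rank of the coefficient matrix is the dimension of the span `V`
of the `Q_j`. If `b, e` is a basis of `V`, then `Q = a(z) b(w) + c(z) e(w)`, where `a, c` are
linearly independent since `Q` is not a product. Hence
`Q^d = Σ_k (d choose k) a^k c^(d-k) · b^k e^(d-k)`. For independent `a, c` over an algebraically
closed field the `d + 1` products `a^k c^(d-k)` are independent, because `a / c` is not a constant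
and is therefore transcendental. So the coefficients of `Q^d` span the same space as the
independent `b^k e^(d-k)`, and the rank of `Q^d` is `d + 1 > 2`.
-/

open Module Submodule Set

theorem Transcendental.linearIndependent_pow {K A : Type*} [Field K] [Ring A] [Algebra K A]
    {t : A} (ht : Transcendental K t) : LinearIndependent K (fun k : ℕ => t ^ k) := by
  have := (basisMonomials K).linearIndependent.map' (Polynomial.aeval t).toLinearMap
    (LinearMap.ker_eq_bot.2 (transcendental_iff_injective.1 ht))
  simpa [Function.comp_def] using this

theorem IsAlgClosed.mem_range_algebraMap_of_isIntegral {K A : Type*} [Field K] [IsAlgClosed K]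
    [Ring A] [IsDomain A] [Algebra K A] {t : A} (ht : IsIntegral K t) :
    t ∈ (algebraMap K A).range :=
  minpoly.mem_range_of_degree_eq_one K t
    (IsAlgClosed.degree_eq_one_of_irreducible K (minpoly.irreducible ht))

section Powers

variable {K A : Type*} [Field K] [IsAlgClosed K] [CommRing A] [IsDomain A] [Algebra K A]

theorem transcendental_div_of_linearIndependent {a c : A} (h : LinearIndependent K ![a, c]) :
    Transcendental K (algebraMap A (FractionRing A) a / algebraMap A (FractionRing A) c) := by
  set φ := algebraMap A (FractionRing A)
  have hc : φ c ≠ 0 :=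
    (map_ne_zero_iff φ (IsFractionRing.injective A _)).2 (by simpa using h.ne_zero 1)
  intro halg
  obtain ⟨r, hr⟩ := IsAlgClosed.mem_range_algebraMap_of_isIntegral halg.isIntegral
  have hφ : φ a = φ (r • c) := by
    rw [Algebra.smul_def, map_mul, ← IsScalarTower.algebraMap_apply, hr, div_mul_cancel₀ _ hc]
  have hac : (1 : K) • a + (-r) • c = 0 := by
    rw [IsFractionRing.injective A (FractionRing A) hφ]
    module
  simpa using (LinearIndependent.pair_iff.1 h _ _ hac).1

theorem linearIndependent_pow_mul_pow {a c : A} (h : LinearIndependent K ![a, c]) (d : ℕ) :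
    LinearIndependent K (fun k : Fin (d + 1) => a ^ (k : ℕ) * c ^ (d - k)) := by
  set φ := algebraMap A (FractionRing A)
  have hc : φ c ≠ 0 :=
    (map_ne_zero_iff φ (IsFractionRing.injective A _)).2 (by simpa using h.ne_zero 1)
  have hpow : ∀ k : Fin (d + 1),
      φ (a ^ (k : ℕ) * c ^ (d - k)) = φ c ^ d * (φ a / φ c) ^ (k : ℕ) := by
    intro k
    have hd : φ c ^ d = φ c ^ (d - k) * φ c ^ (k : ℕ) := by
      rw [← pow_add, Nat.sub_add_cancel (Nat.lt_succ_iff.1 k.2)]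
    rw [map_mul, map_pow, map_pow, hd, div_pow]
    field_simp
  refine LinearIndependent.of_comp (IsScalarTower.toAlgHom K A (FractionRing A)).toLinearMap ?_
  have := ((transcendental_div_of_linearIndependent h).linearIndependent_pow.comp _
    (Fin.val_injective (n := d + 1))).map' (LinearMap.mulLeft K (φ c ^ d))
    (LinearMap.ker_eq_bot.2 (mul_right_injective₀ (pow_ne_zero d hc)))
  have heq : (⇑(IsScalarTower.toAlgHom K A (FractionRing A)).toLinearMap ∘
      fun k : Fin (d + 1) => a ^ (k : ℕ) * c ^ (d - k)) =
      ⇑(LinearMap.mulLeft K (φ c ^ d)) ∘ (fun k : ℕ => (φ a / φ c) ^ k) ∘ Fin.val :=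
    funext hpow
  rwa [heq]

end Powers

section Separated

variable {R : Type*} [CommSemiring R]

theorem coeff_sum_map_C_mul_C {ι : Type*} [Fintype ι] (f g : ι → R[X]) (j : ℕ) :
    (∑ i, (f i).map C * C (g i)).coeff j = ∑ i, (f i).coeff j • g i := by
  simp [coeff_mul_C, smul_eq_C_mul]

theorem exists_eq_sum_map_C_mul_C {ι : Type*} [Fintype ι] (Q : R[X][X])
    (b : Basis ι R (span R (range Q.coeff))) :
    ∃ f : ι → R[X], Q = ∑ i, (f i).map C * C (b i : R[X]) := by
  set ρ : ℕ → ι → R := fun j => b.repr ⟨Q.coeff j, subset_span (mem_range_self j)⟩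
  have hρ : ∀ j ∉ Q.support, ρ j = 0 := fun j hj => by
    have : (⟨Q.coeff j, subset_span (mem_range_self j)⟩ : span R (range Q.coeff)) = 0 :=
      Subtype.ext (notMem_support_iff.1 hj)
    simp [ρ, this]
  refine ⟨fun i => ∑ j ∈ Q.support, monomial j (ρ j i), ?_⟩
  ext1 j
  have hf : ∀ i, (∑ j ∈ Q.support, monomial j (ρ j i)).coeff j = ρ j i := by
    intro i
    simp only [finsetSum_coeff, coeff_monomial, Finset.sum_ite_eq']
    split_ifs with hj
    · rfl
    · simp [hρ j hj]
  simp only [coeff_sum_map_C_mul_C, hf]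
  have := b.sum_repr ⟨Q.coeff j, subset_span (mem_range_self j)⟩
  rw [Subtype.ext_iff] at this
  simp only [Submodule.coe_sum, Submodule.coe_smul] at this
  exact this.symm

theorem map_C_mul_C_add_pow (a c b e : R[X]) (d : ℕ) :
    (a.map C * C b + c.map C * C e) ^ d = ∑ k : Fin (d + 1),
      (a ^ (k : ℕ) * c ^ (d - k)).map C * C ((d.choose k : R) • (b ^ (k : ℕ) * e ^ (d - k))) := by
  rw [add_pow, ← Fin.sum_univ_eq_sum_range]
  refine Finset.sum_congr rfl fun k _ => ?_
  simp only [Polynomial.map_mul, Polynomial.map_pow, smul_eq_C_mul, map_mul, map_pow, mul_pow]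
  rw [← C_eq_natCast, ← C_eq_natCast]
  ring

theorem span_range_coeff_fin_eq {m : ℕ} {P : R[X][X]} (hm : P.natDegree ≤ m) :
    span R (range fun j : Fin (m + 1) => P.coeff j) = span R (range P.coeff) := by
  refine le_antisymm (span_mono (range_comp_subset_range _ _)) (span_le.2 ?_)
  rintro _ ⟨j, rfl⟩
  rcases lt_or_ge j (m + 1) with hj | hj
  · exact subset_span ⟨⟨j, hj⟩, rfl⟩
  · rw [coeff_eq_zero_of_natDegree_lt (by omega)]
    exact zero_mem _

end Separated

section Field

variable {K : Type*} [Field K]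

theorem span_range_coeff_eq_top_of_linearIndependent {ι : Type*} [Fintype ι] {f : ι → K[X]}
    (hf : LinearIndependent K f) :
    span K (range fun j (i : ι) => (f i).coeff j) = ⊤ := by
  classical
  by_contra hne
  -- a nonzero functional `φ` killing every coefficient vector gives the relation
  -- `∑ i, φ (Pi.single i 1) • f i = 0`
  obtain ⟨φ, hφ0, hφ⟩ := exists_le_ker_of_lt_top _ (lt_top_iff_ne_top.2 hne)
  have hsum : ∑ i, (φ fun k => if i = k then 1 else 0) • f i = 0 := by
    ext j
    have : φ (fun i => (f i).coeff j) = 0 := hφ (subset_span ⟨j, rfl⟩)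
    rw [LinearMap.pi_apply_eq_sum_univ] at this
    simpa [finsetSum_coeff, mul_comm] using this
  have hcoord := Fintype.linearIndependent_iff.1 hf _ hsum
  exact hφ0 (LinearMap.ext fun v => by simp [LinearMap.pi_apply_eq_sum_univ φ v, hcoord])

theorem span_range_coeff_sum_map_C_mul_C {ι : Type*} [Fintype ι] {f : ι → K[X]}
    (hf : LinearIndependent K f) (g : ι → K[X]) :
    span K (range (∑ i, (f i).map C * C (g i)).coeff) = span K (range g) := by
  have hcoeff : (∑ i, (f i).map C * C (g i)).coeff =
      Fintype.linearCombination K g ∘ fun j i => (f i).coeff j := by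
    ext1 j
    rw [coeff_sum_map_C_mul_C]
    rfl
  rw [hcoeff, range_comp, span_image, span_range_coeff_eq_top_of_linearIndependent hf,
    Submodule.map_top, Fintype.range_linearCombination]

theorem exists_eq_C_mul_map_C_of_not_linearIndependent {Q : K[X][X]} {a c b e : K[X]}
    (hQ : Q = a.map C * C b + c.map C * C e) (h : ¬ LinearIndependent K ![a, c]) :
    ∃ q T : K[X], Q = C T * q.map C := by
  by_cases ha : a = 0
  · exact ⟨c, e, by rw [hQ, ha]; simp [mul_comm]⟩
  obtain ⟨r, rfl⟩ : ∃ r : K, r • a = c := by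
    simpa [LinearIndependent.pair_iff' ha] using h
  refine ⟨a, b + r • e, ?_⟩
  rw [hQ]
  simp only [smul_eq_C_mul, Polynomial.map_mul, map_C, map_add, map_mul]
  ring

end Field

theorem coeffMatrix_rank_eq_finrank_span {m n : ℕ} {P : ℂ[X][X]} (hm : P.natDegree ≤ m)
    (hn : ∀ j, (P.coeff j).natDegree ≤ n) :
    (coeffMatrix m n P).rank = finrank ℂ (span ℂ (range P.coeff)) := by
  set T : ℂ[X] →ₗ[ℂ] Fin (n + 1) → ℂ := LinearMap.pi fun k => lcoeff ℂ k
  set W := span ℂ (range P.coeff)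
  have hrow : range (coeffMatrix m n P).row = T '' range fun j : Fin (m + 1) => P.coeff j := by
    rw [← range_comp]
    rfl
  have hWD : W ≤ degreeLT ℂ (n + 1) := span_le.2 <| by
    rintro _ ⟨j, rfl⟩
    exact mem_degreeLT.2 ((degree_le_natDegree.trans (WithBot.coe_le_coe.2 (hn j))).trans_lt
      (WithBot.coe_lt_coe.2 n.lt_succ_self))
  have hinj : Function.Injective (T ∘ₗ W.subtype) := by
    have : T ∘ₗ W.subtype = (degreeLTEquiv ℂ (n + 1)).toLinearMap ∘ₗ inclusion hWD := rfl
    rw [this]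
    exact (degreeLTEquiv ℂ (n + 1)).injective.comp (Submodule.inclusion_injective hWD)
  rw [Matrix.rank_eq_finrank_span_row, hrow, span_image, span_range_coeff_fin_eq hm,
    ← LinearMap.finrank_range_of_inj hinj, LinearMap.range_comp, Submodule.range_subtype]

/-- If `Q(z,w)` is a bivariate polynomial whose coefficient matrix has rank `2` and `Q`
is not a product of a polynomial in `z` alone times a polynomial in `w` alone, then for
`d ≥ 2` the coefficient matrix of `Q^d` has rank greater than `2` (equivalently, `Q^d = 0`
cannot be written in the separated form `R(z) = S(w)`). -/
theorem stmt_7 (Q : Polynomial (Polynomial ℂ)) (m n m' n' d : ℕ)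
    (hm : Q.natDegree ≤ m) (hn : ∀ j, (Q.coeff j).natDegree ≤ n)
    (hrank : (coeffMatrix m n Q).rank = 2)
    (hnotprod : ¬ ∃ q T : Polynomial ℂ, Q = Polynomial.C T * q.map Polynomial.C)
    (hd : 2 ≤ d)
    (hm' : (Q ^ d).natDegree ≤ m') (hn' : ∀ j, ((Q ^ d).coeff j).natDegree ≤ n') :
    2 < (coeffMatrix m' n' (Q ^ d)).rank := by
  have hV : finrank ℂ (span ℂ (range Q.coeff)) = 2 :=
    (coeffMatrix_rank_eq_finrank_span hm hn).symm.trans hrank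
  have : Module.Finite ℂ (span ℂ (range Q.coeff)) := Module.finite_of_finrank_eq_succ hV
  set B := Module.finBasisOfFinrankEq ℂ _ hV
  obtain ⟨f, hQ⟩ := exists_eq_sum_map_C_mul_C Q B
  rw [Fin.sum_univ_two] at hQ
  have hB : LinearIndependent ℂ ![(B 0 : ℂ[X]), B 1] := by
    have hvec : ⇑(span ℂ (range Q.coeff)).subtype ∘ B = ![(B 0 : ℂ[X]), B 1] := by
      ext i
      fin_cases i <;> rfl
    rw [← hvec]
    exact B.linearIndependent.map' _ (ker_subtype _)
  have hf : LinearIndependent ℂ ![f 0, f 1] := by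
    by_contra h
    exact hnotprod (exists_eq_C_mul_map_C_of_not_linearIndependent hQ h)
  have hG : LinearIndependent ℂ fun k : Fin (d + 1) =>
      (d.choose k : ℂ) • ((B 0 : ℂ[X]) ^ (k : ℕ) * (B 1 : ℂ[X]) ^ (d - k)) :=
    (linearIndependent_pow_mul_pow hB d).units_smul fun k =>
      Units.mk0 _ (Nat.cast_ne_zero.2 (Nat.choose_pos (Nat.lt_succ_iff.1 k.2)).ne')
  rw [coeffMatrix_rank_eq_finrank_span hm' hn', hQ, map_C_mul_C_add_pow,
    span_range_coeff_sum_map_C_mul_C (linearIndependent_pow_mul_pow hf d), finrank_span_eq_card hG,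
    Fintype.card_fin]
  omega
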